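/- The set of α ∈ (0,1] whose orbits never synchronize, namely {α ∈ (0,1] : T_α^n(α−1) < 0 and T_α^n(α) < 0 for all n ≥ 1}, is contained in {α ∈ (0,1] : T₁^n(α) ≥ α for all n ≥ 1}, and the latter set has Lebesgue measure zero. -/

import Mathlib

/-- The α-continued fraction map T_α on [α−1, α]. -/
noncomputable def TCF (α x : ℝ) : ℝ := if x = 0 then 0 else |1/x| - ⌊|1/x| + 1 - α⌋

/-- The Gauss map T₁(x) = 1/x − ⌊1/x⌋. -/
noncomputable def gaussMap (x : ℝ) : ℝ := if x = 0 then 0 else Int.fract (1/x)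

/-!
While the `T_α`-orbit of a point `-y < 0` stays negative, `T_α` acts on it as
`y ↦ 1 - T₁ y`, and each such step requires `α ≤ T₁ y`. If `g = [0; a₁, a₂, …]` then
`1 - g = [0; 1, a₁ - 1, a₂, …]`, so iterating `y ↦ 1 - T₁ y` from `1 - g` meets a point with
`T₁`-image `T₁² g` and then lands on `1 - T₁² g`. Starting from the orbits of `α - 1 = -(1 - α)`
and of `α` (whose image is that of `-α`), this gives `α ≤ T₁ⁿ α` for all `n ≥ 1`.

Such an `α` has all partial quotients bounded by some `N`. With respect to the density
`1 / (1 + x)` of the Gauss measure, the inverse branches `t ↦ 1 / (k + t)`, `k ≤ N`, of `T₁`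
together carry at most the fraction `N / (N + 1)` of the mass they are applied to, so the points
whose first `n` partial quotients are at most `N` have Gauss measure at most `(N / (N + 1))ⁿ`.
-/

open MeasureTheory Set

lemma gaussMap_eq_fract (x : ℝ) : gaussMap x = Int.fract x⁻¹ := by
  unfold gaussMap
  split_ifs with h <;> simp [h]

lemma gaussMap_nonneg (x : ℝ) : 0 ≤ gaussMap x := gaussMap_eq_fract x ▸ Int.fract_nonneg _

lemma gaussMap_lt_one (x : ℝ) : gaussMap x < 1 := gaussMap_eq_fract x ▸ Int.fract_lt_one _

lemma measurable_gaussMap : Measurable gaussMap := by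
  rw [funext gaussMap_eq_fract]
  exact measurable_fract.comp measurable_inv

lemma TCF_neg (α x : ℝ) : TCF α (-x) = TCF α x := by
  simp [TCF]

lemma TCF_of_pos {α u : ℝ} (hα : α ∈ Icc 0 1) (hu : 0 < u) :
    TCF α u = gaussMap u - if α ≤ gaussMap u then 1 else 0 := by
  have hfloor : ⌊u⁻¹ + 1 - α⌋ = ⌊u⁻¹⌋ + if α ≤ Int.fract u⁻¹ then 1 else 0 := by
    have := Int.floor_add_fract u⁻¹
    have := Int.fract_nonneg u⁻¹
    have := Int.fract_lt_one u⁻¹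
    rw [Int.floor_eq_iff]
    split_ifs <;> push_cast <;> constructor <;> linarith [hα.1, hα.2]
  rw [TCF, if_neg hu.ne', gaussMap_eq_fract, one_div, abs_of_pos (inv_pos.2 hu), hfloor,
    ← Int.self_sub_floor]
  split_ifs <;> push_cast <;> ring

noncomputable def flipGauss (u : ℝ) : ℝ := 1 - gaussMap u

lemma flipGauss_pos (u : ℝ) : 0 < flipGauss u := sub_pos.2 (gaussMap_lt_one u)

lemma le_gaussMap_and_TCF_neg_eq {α y : ℝ} (hα : α ∈ Icc 0 1) (hy : 0 < y)
    (h : TCF α (-y) < 0) : α ≤ gaussMap y ∧ TCF α (-y) = -flipGauss y := by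
  rw [TCF_neg, TCF_of_pos hα hy] at h ⊢
  have := gaussMap_nonneg y
  split_ifs at h ⊢ with hle
  · exact ⟨hle, by rw [flipGauss]; ring⟩
  · linarith

lemma le_gaussMap_flipGauss_iterate {α y : ℝ} (hα : α ∈ Icc 0 1) (hy : 0 < y)
    (h : ∀ n, (TCF α)^[n + 1] (-y) < 0) (n : ℕ) : α ≤ gaussMap (flipGauss^[n] y) := by
  have hpos : ∀ n, 0 < flipGauss^[n] y := by
    rintro (_ | n)
    · exact hy
    · rw [Function.iterate_succ_apply']
      exact flipGauss_pos _
  have horbit : ∀ n, (TCF α)^[n] (-y) = -flipGauss^[n] y := by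
    intro n
    induction n with
    | zero => rfl
    | succ n ih =>
      have hstep := h n
      rw [Function.iterate_succ_apply', ih] at hstep ⊢
      rw [Function.iterate_succ_apply']
      exact (le_gaussMap_and_TCF_neg_eq hα (hpos n) hstep).2
  have hstep := h n
  rw [Function.iterate_succ_apply', horbit] at hstep
  exact (le_gaussMap_and_TCF_neg_eq hα (hpos n) hstep).1

lemma gaussMap_one_sub_of_lt_half {w : ℝ} (h0 : 0 < w) (h1 : w < 1 / 2) :
    gaussMap (1 - w) = w / (1 - w) := by
  rw [gaussMap_eq_fract, Int.fract_eq_iff]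
  refine ⟨div_nonneg h0.le (by linarith), (div_lt_one (by linarith)).2 (by linarith), 1, ?_⟩
  have : 1 - w ≠ 0 := by linarith
  field_simp
  push_cast
  ring

lemma gaussMap_div_one_sub {w : ℝ} (hw : w ≠ 0) :
    gaussMap (w / (1 - w)) = gaussMap w := by
  have : (w / (1 - w))⁻¹ = w⁻¹ - 1 := by
    field_simp
  rw [gaussMap_eq_fract, gaussMap_eq_fract, this, Int.fract_sub_one]

lemma gaussMap_one_sub_of_half_le {w : ℝ} (h0 : 1 / 2 ≤ w) (h1 : w < 1) :
    gaussMap (1 - w) = gaussMap (gaussMap w) := by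
  rcases h0.eq_or_lt with rfl | hlt
  · norm_num [gaussMap_eq_fract]
  · have hw : gaussMap w = w⁻¹ - 1 := by
      rw [gaussMap_eq_fract, Int.fract_eq_iff]
      refine ⟨?_, ?_, 1, by push_cast; ring⟩
      · linarith [one_lt_inv₀ (by linarith) |>.2 h1]
      · have : w⁻¹ < 2 := by rw [inv_lt_comm₀ (by linarith) two_pos]; linarith
        linarith
    have : (1 - w)⁻¹ = (w⁻¹ - 1)⁻¹ + 1 := by
      have : w ≠ 0 := by linarith
      have : 1 - w ≠ 0 := by linarith
      field_simp
      ring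
    rw [hw, gaussMap_eq_fract, gaussMap_eq_fract, this, Int.fract_add_one]

lemma exists_gaussMap_flipGauss_iterate_eq {g : ℝ} (h0 : 0 < g) (h1 : g < 1) :
    ∃ m, gaussMap (flipGauss^[m] (1 - g)) = gaussMap (gaussMap g) := by
  -- Induction on a bound for the first digit `⌊1 / g⌋`; for `g < 1 / 2`, passing from `1 - g`
  -- to `flipGauss (1 - g) = 1 - g / (1 - g)` lowers that digit by one.
  obtain ⟨k, hk⟩ := exists_nat_ge g⁻¹
  induction k generalizing g with
  | zero => exact absurd hk (by simpa using h0)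
  | succ k ih =>
    rcases le_or_gt (1 / 2) g with hg | hg
    · exact ⟨0, gaussMap_one_sub_of_half_le hg h1⟩
    · have hk' : (g / (1 - g))⁻¹ ≤ k := by
        rw [inv_div, sub_div, div_self h0.ne', one_div]
        push_cast at hk
        linarith
      obtain ⟨m, hm⟩ :=
        ih (div_pos h0 (by linarith)) ((div_lt_one (by linarith)).2 (by linarith)) hk'
      refine ⟨m + 1, ?_⟩
      rw [Function.iterate_succ_apply, flipGauss, gaussMap_one_sub_of_lt_half h0 hg, hm,
        gaussMap_div_one_sub h0.ne']

lemma le_gaussMap_gaussMap_of_flipGauss {α g : ℝ} (hg : g ∈ Ioo 0 1)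
    (h : ∀ n, α ≤ gaussMap (flipGauss^[n] (1 - g))) :
    α ≤ gaussMap (gaussMap g) ∧ ∀ n, α ≤ gaussMap (flipGauss^[n] (1 - gaussMap (gaussMap g))) := by
  obtain ⟨m, hm⟩ := exists_gaussMap_flipGauss_iterate_eq hg.1 hg.2
  refine ⟨hm ▸ h m, fun n => ?_⟩
  have : flipGauss^[m + 1] (1 - g) = 1 - gaussMap (gaussMap g) := by
    rw [Function.iterate_succ_apply', flipGauss, hm]
  rw [← this, ← Function.iterate_add_apply]
  exact h _

theorem le_gaussMap_iterate_of_TCF_iterate_neg {α : ℝ} (hα : α ∈ Ioc 0 1)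
    (h : ∀ n : ℕ, 1 ≤ n → (TCF α)^[n] (α - 1) < 0 ∧ (TCF α)^[n] α < 0) :
    ∀ n : ℕ, 1 ≤ n → α ≤ gaussMap^[n] α := by
  have hα1 : α < 1 := by
    refine hα.2.lt_of_ne fun h1 => ?_
    have := (h 1 le_rfl).1
    simp [h1, TCF] at this
  have hαI : α ∈ Icc 0 1 := Ioc_subset_Icc_self hα
  have horbit_sub_one : ∀ n, α ≤ gaussMap (flipGauss^[n] (1 - α)) :=
    le_gaussMap_flipGauss_iterate hαI (by linarith) fun n => by
      simpa using (h (n + 1) (by omega)).1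
  have horbit : ∀ n, α ≤ gaussMap (flipGauss^[n] α) :=
    le_gaussMap_flipGauss_iterate hαI hα.1 fun n => by
      rw [Function.iterate_succ_apply, TCF_neg, ← Function.iterate_succ_apply]
      exact (h (n + 1) (by omega)).2
  let S : Set ℝ := {x | x ∈ Ioo 0 1 ∧ ∀ n, α ≤ gaussMap (flipGauss^[n] (1 - x))}
  have hS : ∀ x ∈ S, α ≤ gaussMap (gaussMap x) ∧ gaussMap (gaussMap x) ∈ S := fun x hx =>
    have h := le_gaussMap_gaussMap_of_flipGauss hx.1 hx.2
    ⟨h.1, ⟨hα.1.trans_le h.1, gaussMap_lt_one _⟩, h.2⟩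
  have hmem : ∀ m, gaussMap^[m] α ∈ S := by
    intro m
    induction m using Nat.twoStepInduction with
    | zero => exact ⟨⟨hα.1, hα1⟩, horbit_sub_one⟩
    | one => exact ⟨⟨hα.1.trans_le (horbit 0), gaussMap_lt_one α⟩, fun n => horbit (n + 1)⟩
    | more m hm _ =>
      rw [Function.iterate_succ_apply', Function.iterate_succ_apply']
      exact (hS _ hm).2
  rintro (_ | _ | m) hn
  · omega
  · exact horbit 0
  · rw [Function.iterate_succ_apply', Function.iterate_succ_apply']
    exact (hS _ (hmem m)).1

/-- The Gauss measure without its normalising factor `1 / log 2`; only its values on subsets of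
`[0, 1]` are used. -/
noncomputable def gaussMeasure : Measure ℝ :=
  volume.withDensity fun x => ENNReal.ofReal (1 + x)⁻¹

lemma gaussMeasure_Icc_zero_one_le_one : gaussMeasure (Icc 0 1) ≤ 1 := by
  rw [gaussMeasure, withDensity_apply _ measurableSet_Icc]
  calc ∫⁻ x in Icc (0 : ℝ) 1, ENNReal.ofReal (1 + x)⁻¹
      ≤ ∫⁻ _ in Icc (0 : ℝ) 1, 1 :=
        setLIntegral_mono measurable_const fun x hx =>
          ENNReal.ofReal_le_one.2 (inv_le_one_of_one_le₀ (by linarith [hx.1]))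
    _ = 1 := by simp

lemma gaussMeasure_image_inv_add {c : ℝ} (hc : 0 < c) {s : Set ℝ} (hs : MeasurableSet s)
    (hs0 : s ⊆ Ici 0) :
    gaussMeasure ((fun t => (c + t)⁻¹) '' s) =
      ∫⁻ t in s, ENNReal.ofReal ((c + t) * (c + 1 + t))⁻¹ := by
  have hpos : ∀ t ∈ s, 0 < c + t := fun t ht => by linarith [mem_Ici.1 (hs0 ht)]
  rw [gaussMeasure, withDensity_apply',
    lintegral_image_eq_lintegral_abs_deriv_mul (f := fun t => (c + t)⁻¹) hs
    (fun t ht => (((hasDerivAt_id' t).const_add c).inv (hpos t ht).ne').hasDerivWithinAt)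
    (fun a _ b _ hab => by simpa using hab)]
  refine setLIntegral_congr_fun hs fun t ht => ?_
  have := hpos t ht
  have : 0 < c + 1 + t := by linarith
  rw [← ENNReal.ofReal_mul (abs_nonneg _), abs_div, abs_neg, abs_one, abs_of_pos (by positivity)]
  congr 1
  field_simp
  ring

lemma sum_range_inv_mul_le (N : ℕ) {t : ℝ} (ht : 0 ≤ t) :
    ∑ k ∈ Finset.range N, (((k + 1 : ℝ) + t) * ((k + 1 : ℝ) + 1 + t))⁻¹ ≤
      N / (N + 1) * (1 + t)⁻¹ := by
  have htel : ∀ N : ℕ, ∑ k ∈ Finset.range N, (((k + 1 : ℝ) + t) * ((k + 1 : ℝ) + 1 + t))⁻¹ =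
      (1 + t)⁻¹ - (N + 1 + t)⁻¹ := by
    intro N
    induction N with
    | zero => simp
    | succ N ih =>
      rw [Finset.sum_range_succ, ih]
      push_cast
      field_simp
      ring
  rw [htel]
  field_simp
  nlinarith [mul_nonneg (Nat.cast_nonneg N : (0 : ℝ) ≤ N) ht]

/-- The points of `[0, 1]` whose first `n` continued fraction digits exist and are at most `N`:
for `0 < x ≤ 1`, the first digit `⌊1 / x⌋` is at most `N` iff `1 / (N + 1) < x`. -/
def digitsLE (N n : ℕ) : Set ℝ :=
  {x | x ∈ Icc 0 1 ∧ ∀ i < n, gaussMap^[i] x ∈ Ioc ((N + 1 : ℝ)⁻¹) 1}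

lemma measurableSet_digitsLE (N n : ℕ) : MeasurableSet (digitsLE N n) := by
  have : digitsLE N n = Icc 0 1 ∩ ⋂ i ∈ Finset.range n, gaussMap^[i] ⁻¹' Ioc ((N + 1 : ℝ)⁻¹) 1 := by
    ext x; simp [digitsLE]
  rw [this]
  exact measurableSet_Icc.inter <| .biInter (Finset.range n).countable_toSet fun i _ =>
    measurable_gaussMap.iterate i measurableSet_Ioc

lemma digitsLE_succ_subset (N n : ℕ) :
    digitsLE N (n + 1) ⊆ ⋃ k ∈ Finset.range N, (fun t => ((k + 1 : ℝ) + t)⁻¹) '' digitsLE N n := by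
  rintro x ⟨-, hx⟩
  obtain ⟨hxN, hx1⟩ := hx 0 n.succ_pos
  have hx0 : 0 < x := lt_trans (by positivity) hxN
  have hfloor1 : 1 ≤ ⌊x⁻¹⌋ := Int.le_floor.2 (by simpa using one_le_inv₀ hx0 |>.2 hx1)
  have hfloorN : ⌊x⁻¹⌋ < N + 1 :=
    Int.floor_lt.2 (by push_cast; exact (inv_lt_comm₀ hx0 (by positivity)).2 hxN)
  obtain ⟨k, hk⟩ := Int.eq_ofNat_of_zero_le (sub_nonneg.2 hfloor1)
  refine mem_biUnion (x := k) (Finset.mem_range.2 (by omega)) ⟨gaussMap x, ⟨?_, fun i hi => ?_⟩, ?_⟩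
  · exact ⟨gaussMap_nonneg x, (gaussMap_lt_one x).le⟩
  · rw [← Function.iterate_succ_apply]
    exact hx (i + 1) (by omega)
  · have : (k + 1 : ℝ) = ⌊x⁻¹⌋ := by
      have : ⌊x⁻¹⌋ = k + 1 := by omega
      exact_mod_cast this.symm
    show ((k : ℝ) + 1 + gaussMap x)⁻¹ = x
    rw [this, gaussMap_eq_fract, Int.floor_add_fract, inv_inv]

lemma gaussMeasure_digitsLE_succ_le (N n : ℕ) :
    gaussMeasure (digitsLE N (n + 1)) ≤
      ENNReal.ofReal (N / (N + 1)) * gaussMeasure (digitsLE N n) := by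
  have hs := measurableSet_digitsLE N n
  have hs0 : digitsLE N n ⊆ Ici 0 := fun x hx => hx.1.1
  calc gaussMeasure (digitsLE N (n + 1))
      ≤ gaussMeasure (⋃ k ∈ Finset.range N, (fun t => ((k + 1 : ℝ) + t)⁻¹) '' digitsLE N n) :=
        measure_mono (digitsLE_succ_subset N n)
    _ ≤ ∑ k ∈ Finset.range N, gaussMeasure ((fun t => ((k + 1 : ℝ) + t)⁻¹) '' digitsLE N n) :=
        measure_biUnion_finset_le _ _
    _ = ∑ k ∈ Finset.range N, ∫⁻ t in digitsLE N n,
          ENNReal.ofReal (((k + 1 : ℝ) + t) * ((k + 1 : ℝ) + 1 + t))⁻¹ :=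
        Finset.sum_congr rfl fun k _ => gaussMeasure_image_inv_add (by positivity) hs hs0
    _ = ∫⁻ t in digitsLE N n, ∑ k ∈ Finset.range N,
          ENNReal.ofReal (((k + 1 : ℝ) + t) * ((k + 1 : ℝ) + 1 + t))⁻¹ :=
        (lintegral_finsetSum _ fun k _ => by fun_prop).symm
    _ ≤ ∫⁻ t in digitsLE N n, ENNReal.ofReal (N / (N + 1)) * ENNReal.ofReal (1 + t)⁻¹ := by
        refine setLIntegral_mono (by fun_prop) fun t ht => ?_
        have ht0 : (0 : ℝ) ≤ t := hs0 ht
        rw [← ENNReal.ofReal_sum_of_nonneg fun k _ => by positivity,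
          ← ENNReal.ofReal_mul (by positivity)]
        exact ENNReal.ofReal_le_ofReal (sum_range_inv_mul_le N ht0)
    _ = ENNReal.ofReal (N / (N + 1)) * gaussMeasure (digitsLE N n) := by
        rw [lintegral_const_mul _ (by fun_prop), gaussMeasure, withDensity_apply _ hs]

lemma gaussMeasure_digitsLE_le (N n : ℕ) :
    gaussMeasure (digitsLE N n) ≤ ENNReal.ofReal (N / (N + 1)) ^ n := by
  induction n with
  | zero => simpa using (measure_mono fun x hx => hx.1).trans gaussMeasure_Icc_zero_one_le_one
  | succ n ih =>
    rw [pow_succ']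
    exact (gaussMeasure_digitsLE_succ_le N n).trans (by gcongr)

lemma volume_iInter_digitsLE (N : ℕ) : volume (⋂ n, digitsLE N n) = 0 := by
  have hρ : ENNReal.ofReal (N / (N + 1)) < 1 :=
    ENNReal.ofReal_lt_one.2 ((div_lt_one (by positivity)).2 (by linarith))
  have hgauss : gaussMeasure (⋂ n, digitsLE N n) = 0 :=
    le_antisymm (ge_of_tendsto' (ENNReal.tendsto_pow_atTop_nhds_zero_of_lt_one hρ) fun n =>
      (measure_mono (iInter_subset _ n)).trans (gaussMeasure_digitsLE_le N n)) bot_le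
  rw [gaussMeasure, withDensity_apply_eq_zero' (by fun_prop)] at hgauss
  refine measure_mono_null (fun x hx => ?_) hgauss
  refine ⟨?_, hx⟩
  have : 0 ≤ x := (mem_iInter.1 hx 0).1.1
  simp only [mem_ofPred_eq, ne_eq, ENNReal.ofReal_eq_zero, not_le]
  positivity

lemma setOf_le_gaussMap_iterate_subset :
    {α : ℝ | α ∈ Ioc 0 1 ∧ ∀ n : ℕ, 1 ≤ n → α ≤ gaussMap^[n] α} ⊆
      ⋃ N : ℕ, ⋂ n, digitsLE N n := by
  rintro α ⟨hα, hle⟩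
  obtain ⟨N, hN⟩ := exists_nat_gt α⁻¹
  have hNα : ((N : ℝ) + 1)⁻¹ < α := inv_lt_of_inv_lt₀ hα.1 (by linarith)
  refine mem_iUnion.2 ⟨N, mem_iInter.2 fun n => ⟨Ioc_subset_Icc_self hα, ?_⟩⟩
  rintro (_ | i) -
  · exact ⟨hNα, hα.2⟩
  · refine ⟨hNα.trans_le (hle _ i.succ_pos), ?_⟩
    rw [Function.iterate_succ_apply']
    exact (gaussMap_lt_one _).le

/-- The set of non-synchronizing α ∈ (0,1] (both orbits of α−1 and α stay negative)
is contained in {α ∈ (0,1] : T₁ⁿ(α) ≥ α for all n ≥ 1}, and the latter set has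
Lebesgue measure zero. -/
theorem non_synchronizing_null :
    {α : ℝ | α ∈ Set.Ioc (0:ℝ) 1 ∧
        ∀ n : ℕ, 1 ≤ n → (TCF α)^[n] (α - 1) < 0 ∧ (TCF α)^[n] α < 0}
      ⊆ {α : ℝ | α ∈ Set.Ioc (0:ℝ) 1 ∧ ∀ n : ℕ, 1 ≤ n → α ≤ gaussMap^[n] α} ∧
    MeasureTheory.volume
      {α : ℝ | α ∈ Set.Ioc (0:ℝ) 1 ∧ ∀ n : ℕ, 1 ≤ n → α ≤ gaussMap^[n] α} = 0 := by
  refine ⟨fun α hα => ⟨hα.1, le_gaussMap_iterate_of_TCF_iterate_neg hα.1 hα.2⟩, ?_⟩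
  exact measure_mono_null setOf_le_gaussMap_iterate_subset
    (measure_iUnion_null volume_iInter_digitsLE)
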